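/- arXiv:2503.02468 — 3 statements merged into one kernel-verified Lean document; each statement's English description precedes it below -/
import Mathlib

section
/- Let L ∈ ℝ^{n×n} be the Laplacian of a connected undirected graph on n vertices, A = blkdiag(A_1, …, A_n) with A_i ∈ ℝ^{q×d}, b = (b_1; …; b_n) with b_i ∈ ℝ^q, and L_q = L ⊗ I_q. Then for every x = (x_1; …; x_n) ∈ ℝ^{nd}, Σ_{i=1}^n (A_i x_i − b_i) = 0 holds if and only if there exists z ∈ ℝ^{nq} such that Ax − b + L_q z = 0. Consequently, the optimization problem min_{x} Σ_i f_i(x_i) subject to (L ⊗ I_d)x = 0 and Σ_i(A_i x_i − b_i) = 0 has the same feasible set in x (and hence the same optimal values and optimal x) as min_{x, z} Σ_i f_i(x_i) subject to (L ⊗ I_d)x = 0 and Ax − b + L_q z = 0. -/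
open Matrix
open scoped Kronecker

noncomputable section

/-- Block-diagonal matrix with blocks `A 1, …, A n`. -/
def blkdiag {n q d : ℕ} (A : Fin n → Matrix (Fin q) (Fin d) ℝ) :
    Matrix (Fin n × Fin q) (Fin n × Fin d) ℝ :=
  Matrix.of fun p r => if p.1 = r.1 then A p.1 p.2 r.2 else 0

/-- The Laplacian of a connected undirected graph. -/
def IsConnectedLaplacian {n : ℕ} (L : Matrix (Fin n) (Fin n) ℝ) : Prop :=
  L.IsSymm ∧ L.PosSemidef ∧ (L *ᵥ (fun _ => (1:ℝ)) = 0) ∧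
  ∀ v : Fin n → ℝ, L *ᵥ v = 0 → ∃ c : ℝ, v = fun _ => c

lemma lap_colsum {n : ℕ} {L : Matrix (Fin n) (Fin n) ℝ} (hL : IsConnectedLaplacian L)
    (j : Fin n) : ∑ i, L i j = 0 := by
  obtain ⟨hsymm, -, hone, -⟩ := hL
  have := congrFun hone j
  simp only [Matrix.mulVec, dotProduct, mul_one, Pi.zero_apply] at this
  rw [← this]
  exact Finset.sum_congr rfl fun i _ => (congrFun (congrFun hsymm j) i).symm ▸ rfl

lemma lap_surj {n : ℕ} (hn : 0 < n) {L : Matrix (Fin n) (Fin n) ℝ}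
    (hL : IsConnectedLaplacian L) (w : Fin n → ℝ) (hw : ∑ i, w i = 0) :
    ∃ u, L *ᵥ u = w := by
  obtain ⟨hsymm, hpsd, hone, hker⟩ := hL
  set J : Matrix (Fin n) (Fin n) ℝ := Matrix.of fun _ _ => (1:ℝ) with hJdef
  have hJ : ∀ u : Fin n → ℝ, J *ᵥ u = fun _ => ∑ i, u i := by
    intro u; funext i; simp [Matrix.mulVec, dotProduct, hJdef]
  have hsplit : ∀ u : Fin n → ℝ,
      u ⬝ᵥ ((L + J) *ᵥ u) = u ⬝ᵥ (L *ᵥ u) + (∑ i, u i)^2 := by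
    intro u
    rw [Matrix.add_mulVec, dotProduct_add, hJ]
    congr 1
    simp [dotProduct, sq, ← Finset.sum_mul]
  have hMinj : Function.Injective (Matrix.mulVecLin (L + J)) := by
    rw [← LinearMap.ker_eq_bot, LinearMap.ker_eq_bot']
    intro u hu
    have hu' : (L + J) *ᵥ u = 0 := hu
    have h0 : u ⬝ᵥ ((L + J) *ᵥ u) = 0 := by rw [hu']; simp
    rw [hsplit] at h0
    have h1 : (0:ℝ) ≤ u ⬝ᵥ (L *ᵥ u) := by
      have := hpsd.dotProduct_mulVec_nonneg u
      simpa using this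
    have h2 : (0:ℝ) ≤ (∑ i, u i)^2 := sq_nonneg _
    have hq : u ⬝ᵥ (L *ᵥ u) = 0 ∧ (∑ i, u i)^2 = 0 := by constructor <;> linarith
    have hLu : L *ᵥ u = 0 := by
      have := (hpsd.dotProduct_mulVec_zero_iff u).mp (by simpa using hq.1)
      exact this
    obtain ⟨c, rfl⟩ := hker u hLu
    have : (n : ℝ) * c = 0 := by
      have := hq.2
      have hs : ∑ _i : Fin n, c = (n:ℝ) * c := by simp [mul_comm]
      rw [hs] at this
      exact pow_eq_zero_iff (n := 2) (by norm_num) |>.mp this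
    have hc : c = 0 := by
      rcases mul_eq_zero.mp this with h | h
      · exact absurd h (by positivity)
      · exact h
    funext i; simp [hc]
  have hMsurj : Function.Surjective (Matrix.mulVecLin (L + J)) :=
    (LinearMap.injective_iff_surjective).mp hMinj
  obtain ⟨u, hu⟩ := hMsurj w
  have hu' : (L + J) *ᵥ u = w := hu
  have hsumu : ∑ i, u i = 0 := by
    have hcol : ∀ j, ∑ i, (L + J) i j = (n : ℝ) := by
      intro j
      have := lap_colsum ⟨hsymm, hpsd, hone, hker⟩ j
      simp [Matrix.add_apply, Finset.sum_add_distrib, this, hJdef]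
    have : ∑ i, w i = ∑ i, ∑ j, (L + J) i j * u j := by
      rw [← hu']; rfl
    rw [Finset.sum_comm] at this
    have h2 : ∑ j, ∑ i, (L + J) i j * u j = (n:ℝ) * ∑ j, u j := by
      rw [Finset.mul_sum]
      refine Finset.sum_congr rfl fun j _ => ?_
      rw [← Finset.sum_mul, hcol]
    rw [h2, hw] at this
    rcases mul_eq_zero.mp this.symm with h | h
    · exact absurd h (by positivity)
    · exact h
  refine ⟨u, ?_⟩
  have : L *ᵥ u + J *ᵥ u = w := by rw [← Matrix.add_mulVec, hu']
  rw [hJ, hsumu] at this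
  funext i
  have := congrFun this i
  simpa using this

lemma key_iff {n d q : ℕ} (hn : 0 < n)
    {L : Matrix (Fin n) (Fin n) ℝ} (hL : IsConnectedLaplacian L)
    (A : Fin n → Matrix (Fin q) (Fin d) ℝ) (b : Fin n → Fin q → ℝ)
    (x : Fin n × Fin d → ℝ) :
    (∑ i, ((A i) *ᵥ (fun a => x (i, a)) - b i) = 0) ↔
    (∃ z : Fin n × Fin q → ℝ,
      blkdiag A *ᵥ x - (fun p => b p.1 p.2) +
        (L ⊗ₖ (1 : Matrix (Fin q) (Fin q) ℝ)) *ᵥ z = 0) := by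
  have hblk : ∀ p : Fin n × Fin q,
      (blkdiag A *ᵥ x) p = (A p.1 *ᵥ fun a => x (p.1, a)) p.2 := by
    intro p
    simp [blkdiag, Matrix.mulVec, dotProduct, Fintype.sum_prod_type, ite_mul,
      Finset.sum_ite_eq, Finset.sum_ite_eq']
  have hkron : ∀ (z : Fin n × Fin q → ℝ) (p : Fin n × Fin q),
      ((L ⊗ₖ (1 : Matrix (Fin q) (Fin q) ℝ)) *ᵥ z) p = ∑ j, L p.1 j * z (j, p.2) := by
    intro z p
    simp [Matrix.mulVec, dotProduct, Fintype.sum_prod_type, Matrix.one_apply,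
      mul_ite, ite_mul, mul_assoc]
  have hsum_iff : (∑ i, ((A i) *ᵥ (fun a => x (i, a)) - b i) = 0) ↔
      ∀ a : Fin q, ∑ i, ((A i *ᵥ fun r => x (i, r)) a - b i a) = 0 := by
    constructor
    · intro h a
      have := congrFun h a
      simpa only [Finset.sum_apply, Pi.sub_apply, Pi.zero_apply] using this
    · intro h
      funext a
      simpa only [Finset.sum_apply, Pi.sub_apply, Pi.zero_apply] using h a
  rw [hsum_iff]
  constructor
  · intro h
    have hex : ∀ a : Fin q, ∃ u : Fin n → ℝ,
        L *ᵥ u = fun i => -((A i *ᵥ fun r => x (i, r)) a - b i a) := by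
      intro a
      refine lap_surj hn hL _ ?_
      rw [Finset.sum_neg_distrib, h a, neg_zero]
    choose u hu using hex
    refine ⟨fun p => u p.2 p.1, ?_⟩
    funext p
    have h1 := congrFun (hu p.2) p.1
    simp only [Matrix.mulVec, dotProduct] at h1
    simp only [Pi.add_apply, Pi.sub_apply, Pi.zero_apply, hblk, hkron]
    rw [show ∑ j, L p.1 j * (fun p : Fin n × Fin q => u p.2 p.1) (j, p.2)
        = ∑ j, L p.1 j * u p.2 j from rfl, h1,
      show (A p.1 *ᵥ fun a => x (p.1, a)) p.2 = ∑ r, A p.1 p.2 r * x (p.1, r) from rfl]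
    ring
  · rintro ⟨z, hz⟩ a
    have hcomp : ∀ i : Fin n,
        ((A i *ᵥ fun r => x (i, r)) a - b i a) + ∑ j, L i j * z (j, a) = 0 := by
      intro i
      have := congrFun hz (i, a)
      simpa only [Pi.add_apply, Pi.sub_apply, Pi.zero_apply, hblk, hkron] using this
    have hsum := Finset.sum_congr rfl (fun i (_ : i ∈ Finset.univ) => hcomp i)
    rw [Finset.sum_add_distrib, Finset.sum_const, smul_zero] at hsum
    rw [Finset.sum_comm] at hsum
    have hz0 : ∑ j : Fin n, ∑ i : Fin n, L i j * z (j, a) = 0 := by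
      refine Finset.sum_eq_zero fun j _ => ?_
      rw [← Finset.sum_mul, lap_colsum hL j, zero_mul]
    rw [hz0, add_zero] at hsum
    exact hsum

/-- **Lemma 2 (equivalent reformulation of the coupled equality constraint).**
`Σᵢ (Aᵢxᵢ − bᵢ) = 0` iff `Ax − b + L_q z = 0` for some `z`; consequently the
coupled-constraint problem and its reformulation have the same feasible set in `x`
and the same optimal solutions `x`. -/
theorem coupled_constraint_reformulation
    (n d q : ℕ) (hn : 0 < n)
    (L : Matrix (Fin n) (Fin n) ℝ) (hL : IsConnectedLaplacian L)
    (A : Fin n → Matrix (Fin q) (Fin d) ℝ) (b : Fin n → Fin q → ℝ)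
    (f : Fin n → (Fin d → ℝ) → ℝ) :
    -- the pointwise equivalence of the two constraints
    (∀ x : Fin n × Fin d → ℝ,
      (∑ i, ((A i) *ᵥ (fun a => x (i, a)) - b i) = 0) ↔
      (∃ z : Fin n × Fin q → ℝ,
        blkdiag A *ᵥ x - (fun p => b p.1 p.2) +
          (L ⊗ₖ (1 : Matrix (Fin q) (Fin q) ℝ)) *ᵥ z = 0)) ∧
    -- equality of the feasible sets in x
    ({x : Fin n × Fin d → ℝ |
        (L ⊗ₖ (1 : Matrix (Fin d) (Fin d) ℝ)) *ᵥ x = 0 ∧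
        (∑ i, ((A i) *ᵥ (fun a => x (i, a)) - b i) = 0)} =
      {x : Fin n × Fin d → ℝ |
        (L ⊗ₖ (1 : Matrix (Fin d) (Fin d) ℝ)) *ᵥ x = 0 ∧
        ∃ z : Fin n × Fin q → ℝ,
          blkdiag A *ᵥ x - (fun p => b p.1 p.2) +
            (L ⊗ₖ (1 : Matrix (Fin q) (Fin q) ℝ)) *ᵥ z = 0}) ∧
    -- equivalence of optimal solutions in x
    (∀ x : Fin n × Fin d → ℝ,
      (((L ⊗ₖ (1 : Matrix (Fin d) (Fin d) ℝ)) *ᵥ x = 0 ∧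
          (∑ i, ((A i) *ᵥ (fun a => x (i, a)) - b i) = 0)) ∧
        (∀ y : Fin n × Fin d → ℝ,
          ((L ⊗ₖ (1 : Matrix (Fin d) (Fin d) ℝ)) *ᵥ y = 0 ∧
            (∑ i, ((A i) *ᵥ (fun a => y (i, a)) - b i) = 0)) →
          (∑ i, f i (fun a => x (i, a))) ≤ ∑ i, f i (fun a => y (i, a)))) ↔
      (∃ z : Fin n × Fin q → ℝ,
        ((L ⊗ₖ (1 : Matrix (Fin d) (Fin d) ℝ)) *ᵥ x = 0 ∧
          blkdiag A *ᵥ x - (fun p => b p.1 p.2) +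
            (L ⊗ₖ (1 : Matrix (Fin q) (Fin q) ℝ)) *ᵥ z = 0) ∧
        (∀ (y : Fin n × Fin d → ℝ) (w : Fin n × Fin q → ℝ),
          ((L ⊗ₖ (1 : Matrix (Fin d) (Fin d) ℝ)) *ᵥ y = 0 ∧
            blkdiag A *ᵥ y - (fun p => b p.1 p.2) +
              (L ⊗ₖ (1 : Matrix (Fin q) (Fin q) ℝ)) *ᵥ w = 0) →
          (∑ i, f i (fun a => x (i, a))) ≤ ∑ i, f i (fun a => y (i, a))))) := by
  have key := fun x => key_iff hn hL A b x
  refine ⟨key, ?_, ?_⟩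
  · ext x
    simp only [Set.mem_setOf_eq]
    exact and_congr_right fun _ => key x
  · intro x
    constructor
    · rintro ⟨⟨hLx, hsum⟩, hmin⟩
      obtain ⟨z, hz⟩ := (key x).mp hsum
      exact ⟨z, ⟨hLx, hz⟩, fun y w ⟨hLy, hw⟩ => hmin y ⟨hLy, (key y).mpr ⟨w, hw⟩⟩⟩
    · rintro ⟨z, ⟨hLx, hz⟩, hmin⟩
      refine ⟨⟨hLx, (key x).mpr ⟨z, hz⟩⟩, fun y ⟨hLy, hsy⟩ => ?_⟩
      obtain ⟨w, hw⟩ := (key y).mp hsy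
      exact hmin y w ⟨hLy, hw⟩
end
end

section
/- Let F̃ : ℝ^{nd} → ℝ be differentiable and μ-strongly convex, let L ∈ ℝ^{n×n} be the Laplacian of a connected undirected graph, L_d = L ⊗ I_d, L_q = L ⊗ I_q, A = blkdiag(A_1, …, A_n) with A_i ∈ ℝ^{q×d}, and b = (b_1; …; b_n) ∈ ℝ^{nq}. Then (x*, z*) ∈ ℝ^{nd} × ℝ^{nq} is an optimal solution of min_{x,z} F̃(x) subject to L_d x = 0 and Ax − b + L_q z = 0 if and only if Ax* + L_q z* = b, L_d x* = 0, and there exist ν* ∈ ℝ^{nq} and λ* ∈ ℝ^{nd} such that ∇F̃(x*) = Aᵀ ν* + L_d λ* and L_q ν* = 0. -/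
open Matrix
open scoped Kronecker RealInnerProductSpace

noncomputable section

/-- Interpret a plain function as an element of Euclidean space. -/
def toE {ι : Type*} (v : ι → ℝ) : EuclideanSpace ℝ ι := WithLp.toLp 2 v

/-- Matrix-vector multiplication on Euclidean spaces. -/
def mulE {ι κ : Type*} [Fintype κ] (M : Matrix ι κ ℝ) (v : EuclideanSpace ℝ κ) :
    EuclideanSpace ℝ ι := toE (M.mulVec (fun j => v j))

theorem mulE_eq {ι κ : Type*} [Fintype κ] [Fintype ι] [DecidableEq κ] (M : Matrix ι κ ℝ)
    (v : EuclideanSpace ℝ κ) : mulE M v = Matrix.toEuclideanLin M v := rfl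

theorem orth_range {E F : Type*} [NormedAddCommGroup E] [InnerProductSpace ℝ E]
    [NormedAddCommGroup F] [InnerProductSpace ℝ F] [FiniteDimensional ℝ E] [FiniteDimensional ℝ F]
    (T : E →ₗ[ℝ] F) : (LinearMap.range T)ᗮ = LinearMap.ker (LinearMap.adjoint T) := by
  ext v
  simp only [Submodule.mem_orthogonal, LinearMap.mem_ker, LinearMap.mem_range]
  constructor
  · intro h
    have := h (T (LinearMap.adjoint T v)) ⟨_, rfl⟩
    rw [← LinearMap.adjoint_inner_right] at this
    exact inner_self_eq_zero.mp this
  · rintro h u ⟨w, rfl⟩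
    rw [← LinearMap.adjoint_inner_right, h, inner_zero_right]

theorem range_eq_orth_ker {E F : Type*} [NormedAddCommGroup E] [InnerProductSpace ℝ E]
    [NormedAddCommGroup F] [InnerProductSpace ℝ F] [FiniteDimensional ℝ E] [FiniteDimensional ℝ F]
    (T : E →ₗ[ℝ] F) : LinearMap.range T = (LinearMap.ker (LinearMap.adjoint T))ᗮ := by
  rw [← orth_range, Submodule.orthogonal_orthogonal]

/-- **KKT characterization of optimality for the reformulated coupled
linear-equality constrained problem.** `(x*, z*)` is optimal for
`min F̃(x) s.t. L_d x = 0, Ax − b + L_q z = 0` iff `Ax* + L_q z* = b`,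
`L_d x* = 0` and `∇F̃(x*) = Aᵀν* + L_d λ*`, `L_q ν* = 0` for some `ν*, λ*`. -/
theorem optimality_iff_kkt_coupled_constraints
    (n d q : ℕ) (hn : 0 < n)
    (L : Matrix (Fin n) (Fin n) ℝ) (hL : IsConnectedLaplacian L)
    (F : EuclideanSpace ℝ (Fin n × Fin d) → ℝ)
    (gradF : EuclideanSpace ℝ (Fin n × Fin d) → EuclideanSpace ℝ (Fin n × Fin d))
    (hgrad : ∀ x, HasGradientAt F (gradF x) x)
    (μ : ℝ) (hμ : 0 < μ)
    (hsc : ∀ x y : EuclideanSpace ℝ (Fin n × Fin d),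
      F x + ⟪gradF x, y - x⟫ + μ / 2 * ‖y - x‖ ^ 2 ≤ F y)
    (A : Fin n → Matrix (Fin q) (Fin d) ℝ)
    (b : EuclideanSpace ℝ (Fin n × Fin q))
    (xstar : EuclideanSpace ℝ (Fin n × Fin d))
    (zstar : EuclideanSpace ℝ (Fin n × Fin q)) :
    (mulE (L ⊗ₖ (1 : Matrix (Fin d) (Fin d) ℝ)) xstar = 0 ∧
      mulE (blkdiag A) xstar - b +
        mulE (L ⊗ₖ (1 : Matrix (Fin q) (Fin q) ℝ)) zstar = 0 ∧
      ∀ (y : EuclideanSpace ℝ (Fin n × Fin d))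
        (w : EuclideanSpace ℝ (Fin n × Fin q)),
        (mulE (L ⊗ₖ (1 : Matrix (Fin d) (Fin d) ℝ)) y = 0 ∧
          mulE (blkdiag A) y - b +
            mulE (L ⊗ₖ (1 : Matrix (Fin q) (Fin q) ℝ)) w = 0) →
        F xstar ≤ F y) ↔
    (mulE (blkdiag A) xstar +
        mulE (L ⊗ₖ (1 : Matrix (Fin q) (Fin q) ℝ)) zstar = b ∧
      mulE (L ⊗ₖ (1 : Matrix (Fin d) (Fin d) ℝ)) xstar = 0 ∧
      ∃ (ν : EuclideanSpace ℝ (Fin n × Fin q))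
        (lam : EuclideanSpace ℝ (Fin n × Fin d)),
        gradF xstar = mulE (blkdiag A)ᵀ ν +
          mulE (L ⊗ₖ (1 : Matrix (Fin d) (Fin d) ℝ)) lam ∧
        mulE (L ⊗ₖ (1 : Matrix (Fin q) (Fin q) ℝ)) ν = 0) := by
  simp only [mulE_eq]
  set Ld : EuclideanSpace ℝ (Fin n × Fin d) →ₗ[ℝ] EuclideanSpace ℝ (Fin n × Fin d) :=
    Matrix.toEuclideanLin (L ⊗ₖ (1 : Matrix (Fin d) (Fin d) ℝ)) with hLd
  set Lq : EuclideanSpace ℝ (Fin n × Fin q) →ₗ[ℝ] EuclideanSpace ℝ (Fin n × Fin q) :=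
    Matrix.toEuclideanLin (L ⊗ₖ (1 : Matrix (Fin q) (Fin q) ℝ)) with hLq
  set Am : EuclideanSpace ℝ (Fin n × Fin d) →ₗ[ℝ] EuclideanSpace ℝ (Fin n × Fin q) :=
    Matrix.toEuclideanLin (blkdiag A) with hAm
  have hkerT : ∀ (k : ℕ), (L ⊗ₖ (1 : Matrix (Fin k) (Fin k) ℝ))ᴴ
      = L ⊗ₖ (1 : Matrix (Fin k) (Fin k) ℝ) := by
    intro k
    rw [Matrix.conjTranspose_eq_transpose_of_trivial, ← Matrix.kroneckerMap_transpose,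
      Matrix.transpose_one, hL.1.eq]
  have hLdsa : LinearMap.adjoint Ld = Ld := by
    rw [hLd, ← Matrix.toEuclideanLin_conjTranspose_eq_adjoint, hkerT]
  have hLqsa : LinearMap.adjoint Lq = Lq := by
    rw [hLq, ← Matrix.toEuclideanLin_conjTranspose_eq_adjoint, hkerT]
  have hAmadj : LinearMap.adjoint Am = Matrix.toEuclideanLin (blkdiag A)ᵀ := by
    rw [hAm, ← Matrix.toEuclideanLin_conjTranspose_eq_adjoint,
      Matrix.conjTranspose_eq_transpose_of_trivial]
  rw [← hAmadj]
  set W : Submodule ℝ (EuclideanSpace ℝ (Fin n × Fin d)) :=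
    LinearMap.range Ld ⊔ Submodule.map (LinearMap.adjoint Am) (LinearMap.ker Lq) with hW
  have hrangeLq : LinearMap.range Lq = (LinearMap.ker Lq)ᗮ := by
    rw [range_eq_orth_ker, hLqsa]
  have hWperp : ∀ h, h ∈ Wᗮ ↔ (Ld h = 0 ∧ Am h ∈ LinearMap.range Lq) := by
    intro h
    rw [hW, ← Submodule.inf_orthogonal, Submodule.mem_inf, orth_range, hLdsa,
      LinearMap.mem_ker, hrangeLq]
    constructor
    · rintro ⟨h1, h2⟩
      refine ⟨h1, ?_⟩
      rw [Submodule.mem_orthogonal]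
      intro ν hν
      have := (Submodule.mem_orthogonal _ _).mp h2 (LinearMap.adjoint Am ν)
        (Submodule.mem_map_of_mem hν)
      rwa [LinearMap.adjoint_inner_left] at this
    · rintro ⟨h1, h2⟩
      refine ⟨h1, ?_⟩
      rw [Submodule.mem_orthogonal]
      rintro u ⟨ν, hν, rfl⟩
      rw [LinearMap.adjoint_inner_left]
      exact (Submodule.mem_orthogonal _ _).mp h2 ν hν
  have hWmem : ∀ g, g ∈ W ↔
      ∃ ν lam, g = LinearMap.adjoint Am ν + Ld lam ∧ Lq ν = 0 := by
    intro g
    rw [hW, Submodule.mem_sup]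
    constructor
    · rintro ⟨y, ⟨lam, rfl⟩, z, ⟨ν, hν, rfl⟩, rfl⟩
      exact ⟨ν, lam, add_comm _ _, hν⟩
    · rintro ⟨ν, lam, rfl, hν⟩
      exact ⟨Ld lam, ⟨lam, rfl⟩, LinearMap.adjoint Am ν, ⟨ν, hν, rfl⟩, add_comm _ _⟩
  constructor
  · rintro ⟨h1, h2, hopt⟩
    have hfeas : Am xstar + Lq zstar = b := by
      apply sub_eq_zero.mp
      have e : Am xstar + Lq zstar - b = Am xstar - b + Lq zstar := by abel
      rw [e, h2]
    refine ⟨hfeas, h1, ?_⟩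
    rw [← hWmem]
    rw [← Submodule.orthogonal_orthogonal W, Submodule.mem_orthogonal]
    intro h hh
    obtain ⟨e1, w0, hw0⟩ := (hWperp h).mp hh
    have hline : ∀ t : ℝ, F xstar ≤ F (xstar + t • h) := by
      intro t
      apply hopt (xstar + t • h) (zstar - t • w0)
      constructor
      · rw [map_add, h1, LinearMap.map_smul, e1, smul_zero, add_zero]
      · have e : Am (xstar + t • h) - b + Lq (zstar - t • w0)
            = (Am xstar - b + Lq zstar) + t • (Am h - Lq w0) := by
          rw [map_add, LinearMap.map_smul, map_sub, LinearMap.map_smul, smul_sub]; abel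
        rw [e, h2, hw0]
        simp
    have h0 : xstar + (0 : ℝ) • h = xstar := by simp
    have hc : HasDerivAt (fun t : ℝ => xstar + t • h) h 0 := by
      simpa using ((hasDerivAt_id (0 : ℝ)).smul_const h).const_add xstar
    have hF : HasFDerivAt F (InnerProductSpace.toDual ℝ _ (gradF xstar)) (xstar + (0 : ℝ) • h) := by
      rw [h0]; exact (hgrad xstar).hasFDerivAt
    have hφ : HasDerivAt (fun t : ℝ => F (xstar + t • h)) ⟪gradF xstar, h⟫ 0 := by
      have := hF.comp_hasDerivAt 0 hc
      simp only [InnerProductSpace.toDual_apply_apply] at this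
      exact this
    have hloc : IsLocalMin (fun t : ℝ => F (xstar + t • h)) 0 :=
      Filter.Eventually.of_forall fun t => by simpa [h0] using hline t
    have hkey : ⟪gradF xstar, h⟫ = 0 := hloc.hasDerivAt_eq_zero hφ
    rw [real_inner_comm]
    exact hkey
  · rintro ⟨hfeas, h1, ν, lam, hg, hν⟩
    have h2 : Am xstar - b + Lq zstar = 0 := by
      apply sub_eq_zero.mp
      have e : Am xstar - b + Lq zstar - 0 = Am xstar + Lq zstar - b := by abel
      rw [e, hfeas, sub_self]
    refine ⟨h1, h2, ?_⟩
    rintro y w ⟨hy1, hy2⟩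
    have e1 : Ld (y - xstar) = 0 := by rw [map_sub, hy1, h1, sub_zero]
    have e2 : Am (y - xstar) = Lq (zstar - w) := by
      rw [map_sub, map_sub]
      have e : Am y - Am xstar
          = (Am y - b + Lq w) - (Am xstar - b + Lq zstar) + (Lq zstar - Lq w) := by abel
      rw [e, hy2, h2]
      abel
    have t2 : ⟪Ld lam, y - xstar⟫ = 0 := by
      nth_rewrite 1 [← hLdsa]
      rw [LinearMap.adjoint_inner_left, e1, inner_zero_right]
    have t1 : ⟪ν, Am (y - xstar)⟫ = 0 := by
      rw [e2]
      nth_rewrite 1 [← hLqsa]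
      rw [LinearMap.adjoint_inner_right, hν, inner_zero_left]
    have key : ⟪gradF xstar, y - xstar⟫ = 0 := by
      rw [hg, inner_add_left, LinearMap.adjoint_inner_left, t1, t2, add_zero]
    have hs := hsc xstar y
    rw [key] at hs
    have hsq : (0:ℝ) ≤ μ / 2 * ‖y - xstar‖ ^ 2 := by positivity
    linarith
end
end

section
/- Let F : ℝ^{nd} → ℝ be differentiable, μ-strongly convex, with L_F-Lipschitz continuous gradient, and let x* ∈ ℝ^{nd}. Let S ∈ ℝ^{n×(n−1)} satisfy SᵀS = I_{n−1}, Sᵀ1_n = 0 and SSᵀ = I_n − (1/n)1_n1_nᵀ, and set 𝕊 = S ⊗ I_d and 𝕀 = 1_n ⊗ I_d. For x̄ ∈ ℝ^{nd} write x^⊥ = 𝕊ᵀx̄, x^∥ = 𝕀ᵀx̄, and g(x̄) = ∇F(x̄ + x*) − ∇F(x*). Then there exist constants c₁ > 0 and c₂ > 0, depending only on μ, n and L_F, such that for all x̄ ∈ ℝ^{nd}: −⟨x^∥, 𝕀ᵀ g(x̄)⟩ ≤ −c₁‖x^∥‖² + c₂‖x^⊥‖². In particular one may take c₁ = μ/2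 and c₂ = nL_F + nL_F²/(2μ). -/
open Matrix
open scoped Kronecker RealInnerProductSpace

noncomputable section

/-- The matrix `𝕀 = 1_n ⊗ I_d ∈ ℝ^{nd × d}`. -/
def onesKronId (n d : ℕ) : Matrix (Fin n × Fin d) (Fin d) ℝ :=
  Matrix.of fun p a => if p.2 = a then 1 else 0


section aux
variable {ι κ τ : Type*} [Fintype ι] [Fintype κ] [Fintype τ]

lemma inner_mulE (M : Matrix ι κ ℝ) (x : EuclideanSpace ℝ κ) (y : EuclideanSpace ℝ ι) :
    ⟪mulE M x, y⟫ = ⟪x, mulE Mᵀ y⟫ := by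
  simp only [mulE, toE, PiLp.inner_apply, RCLike.inner_apply, conj_trivial,
    Matrix.mulVec, dotProduct, Matrix.transpose_apply, PiLp.toLp_apply]
  simp_rw [Finset.sum_mul, Finset.mul_sum]
  rw [Finset.sum_comm]
  exact Finset.sum_congr rfl fun j _ => Finset.sum_congr rfl fun i _ => by ring

omit [Fintype ι] in
lemma mulE_mulE (M : Matrix ι κ ℝ) (N : Matrix κ τ ℝ) (x : EuclideanSpace ℝ τ) :
    mulE M (mulE N x) = mulE (M * N) x := by
  simp [mulE, toE, Matrix.mulVec_mulVec]

lemma mulE_one [DecidableEq ι] (x : EuclideanSpace ℝ ι) : mulE (1 : Matrix ι ι ℝ) x = x := by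
  simp [mulE, toE]

omit [Fintype ι] in
lemma mulE_add (M N : Matrix ι κ ℝ) (x : EuclideanSpace ℝ κ) :
    mulE (M + N) x = mulE M x + mulE N x := by
  ext i
  simp [mulE, toE, Matrix.add_mulVec]

omit [Fintype ι] in
lemma mulE_smul (c : ℝ) (M : Matrix ι κ ℝ) (x : EuclideanSpace ℝ κ) :
    mulE (c • M) x = c • mulE M x := by
  ext i
  simp [mulE, toE, Matrix.smul_mulVec]

end aux

/-- `𝕀ᵀ𝕀 = n • 1`. -/
lemma onesKronId_gram (n d : ℕ) :
    (onesKronId n d)ᵀ * onesKronId n d = (n : ℝ) • 1 := by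
  ext a b
  simp only [Matrix.mul_apply, Matrix.transpose_apply, onesKronId, Matrix.of_apply,
    Matrix.smul_apply, Matrix.one_apply, smul_eq_mul]
  rw [Fintype.sum_prod_type]
  by_cases h : a = b
  · subst h
    simp
  · simp [h, Ne.symm h, ite_and]

/-- `𝕀𝕀ᵀ = 1_n1_nᵀ ⊗ I_d`. -/
lemma onesKronId_outer (n d : ℕ) :
    onesKronId n d * (onesKronId n d)ᵀ
      = (Matrix.of (fun _ _ => (1:ℝ)) : Matrix (Fin n) (Fin n) ℝ) ⊗ₖ (1 : Matrix (Fin d) (Fin d) ℝ) := by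
  ext p q
  simp only [Matrix.mul_apply, Matrix.transpose_apply, onesKronId, Matrix.of_apply,
    Matrix.kroneckerMap_apply, Matrix.one_apply, one_mul]
  by_cases h : p.2 = q.2
  · rw [Finset.sum_eq_single p.2]
    · simp [h]
    · intro b _ hb
      simp [Ne.symm hb]
    · simp
  · rw [Finset.sum_eq_zero]
    · simp [h]
    · intro j _
      by_cases hj : p.2 = j
      · simp [hj, show ¬ q.2 = j from fun hq => h (hj.trans hq.symm)]
      · simp [hj]

/-- **Strong-convexity cross-term estimate in decomposed coordinates.**
For `g(x̄) = ∇F(x̄ + x*) − ∇F(x*)`, `x^⊥ = 𝕊ᵀx̄`, `x^∥ = 𝕀ᵀx̄`, one has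
`−⟨x^∥, 𝕀ᵀg(x̄)⟩ ≤ −c₁‖x^∥‖² + c₂‖x^⊥‖²`; in particular with
`c₁ = μ/2` and `c₂ = nL_F + nL_F²/(2μ)`. -/
theorem strong_convexity_decomposed_cross_term
    (n d : ℕ) (hn : 0 < n)
    (F : EuclideanSpace ℝ (Fin n × Fin d) → ℝ)
    (gradF : EuclideanSpace ℝ (Fin n × Fin d) → EuclideanSpace ℝ (Fin n × Fin d))
    (hgrad : ∀ x, HasGradientAt F (gradF x) x)
    (μ : ℝ) (hμ : 0 < μ)
    (hsc : ∀ x y : EuclideanSpace ℝ (Fin n × Fin d),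
      μ * ‖y - x‖ ^ 2 ≤ ⟪gradF y - gradF x, y - x⟫)
    (LF : ℝ) (hLF : 0 < LF)
    (hLip : ∀ x y : EuclideanSpace ℝ (Fin n × Fin d),
      ‖gradF y - gradF x‖ ≤ LF * ‖y - x‖)
    (xstar : EuclideanSpace ℝ (Fin n × Fin d))
    (S : Matrix (Fin n) (Fin (n - 1)) ℝ)
    (hSorth : Sᵀ * S = 1)
    (hSones : Sᵀ *ᵥ (fun _ => (1:ℝ)) = 0)
    (hSproj : S * Sᵀ = 1 - (n : ℝ)⁻¹ • Matrix.of (fun _ _ => (1:ℝ))) :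
    (∃ c₁ > (0:ℝ), ∃ c₂ > (0:ℝ),
      ∀ xb : EuclideanSpace ℝ (Fin n × Fin d),
        -⟪mulE (onesKronId n d)ᵀ xb,
            mulE (onesKronId n d)ᵀ (gradF (xb + xstar) - gradF xstar)⟫ ≤
          -c₁ * ‖mulE (onesKronId n d)ᵀ xb‖ ^ 2 +
            c₂ * ‖mulE (S ⊗ₖ (1 : Matrix (Fin d) (Fin d) ℝ))ᵀ xb‖ ^ 2) ∧
    -- in particular one may take c₁ = μ/2 and c₂ = nL_F + nL_F²/(2μ)
    (∀ xb : EuclideanSpace ℝ (Fin n × Fin d),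
      -⟪mulE (onesKronId n d)ᵀ xb,
          mulE (onesKronId n d)ᵀ (gradF (xb + xstar) - gradF xstar)⟫ ≤
        -(μ / 2) * ‖mulE (onesKronId n d)ᵀ xb‖ ^ 2 +
          (n * LF + n * LF ^ 2 / (2 * μ)) *
            ‖mulE (S ⊗ₖ (1 : Matrix (Fin d) (Fin d) ℝ))ᵀ xb‖ ^ 2) := by
  have hn' : (0:ℝ) < (n:ℝ) := by exact_mod_cast hn
  have hn0 : (n:ℝ) ≠ 0 := ne_of_gt hn'
  set Smat : Matrix (Fin n × Fin d) (Fin (n-1) × Fin d) ℝ :=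
    S ⊗ₖ (1 : Matrix (Fin d) (Fin d) ℝ) with hSmat
  -- transpose of the Kronecker factor
  have hSmatT : Smatᵀ = Sᵀ ⊗ₖ (1 : Matrix (Fin d) (Fin d) ℝ) := by
    rw [hSmat, ← Matrix.kroneckerMap_transpose, Matrix.transpose_one]
  -- 𝕊ᵀ𝕊 = 1
  have hSTS : Smatᵀ * Smat = 1 := by
    rw [hSmatT, hSmat, ← Matrix.mul_kronecker_mul, hSorth, Matrix.one_mul,
      Matrix.one_kronecker_one]
  -- resolution of identity
  have hkey : Smat * Smatᵀ + (n:ℝ)⁻¹ • (onesKronId n d * (onesKronId n d)ᵀ) = 1 := by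
    rw [hSmatT, hSmat, ← Matrix.mul_kronecker_mul, hSproj, Matrix.one_mul, onesKronId_outer,
      sub_eq_add_neg, ← neg_smul, Matrix.add_kronecker, Matrix.smul_kronecker,
      Matrix.one_kronecker_one]
    module
  -- the main estimate
  have main : ∀ xb : EuclideanSpace ℝ (Fin n × Fin d),
      -⟪mulE (onesKronId n d)ᵀ xb,
          mulE (onesKronId n d)ᵀ (gradF (xb + xstar) - gradF xstar)⟫ ≤
        -(μ / 2) * ‖mulE (onesKronId n d)ᵀ xb‖ ^ 2 +
          (n * LF + n * LF ^ 2 / (2 * μ)) *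
            ‖mulE Smatᵀ xb‖ ^ 2 := by
    intro xb
    set G : EuclideanSpace ℝ (Fin n × Fin d) := gradF (xb + xstar) - gradF xstar with hG
    set u : EuclideanSpace ℝ (Fin d) := mulE (onesKronId n d)ᵀ xb with hu
    set w : EuclideanSpace ℝ (Fin (n-1) × Fin d) := mulE Smatᵀ xb with hw
    -- decomposition of xb
    have hres : mulE Smat w + (n:ℝ)⁻¹ • mulE (onesKronId n d) u = xb := by
      rw [hw, hu, mulE_mulE, mulE_mulE, ← mulE_smul, ← mulE_add, hkey, mulE_one]
    have hsub : (n:ℝ)⁻¹ • mulE (onesKronId n d) u = xb - mulE Smat w := by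
      rw [← hres]; abel
    -- norm of 𝕊w
    have hSnorm : ‖mulE Smat w‖ = ‖w‖ := by
      have h2 : ‖mulE Smat w‖ ^ 2 = ‖w‖ ^ 2 := by
        rw [← real_inner_self_eq_norm_sq, ← real_inner_self_eq_norm_sq, inner_mulE,
          mulE_mulE, hSTS, mulE_one]
      have := congrArg Real.sqrt h2
      simpa [Real.sqrt_sq (norm_nonneg _)] using this
    -- Pythagoras
    have hpyth : ‖xb‖ ^ 2 = ‖w‖ ^ 2 + (n:ℝ)⁻¹ * ‖u‖ ^ 2 := by
      have e1 : ⟪xb, mulE Smat w⟫ = ‖w‖ ^ 2 := by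
        rw [real_inner_comm, inner_mulE, ← hw, real_inner_self_eq_norm_sq]
      have e2 : ⟪xb, mulE (onesKronId n d) u⟫ = ‖u‖ ^ 2 := by
        rw [real_inner_comm, inner_mulE, ← hu, real_inner_self_eq_norm_sq]
      calc ‖xb‖ ^ 2 = ⟪xb, xb⟫ := (real_inner_self_eq_norm_sq xb).symm
        _ = ⟪xb, mulE Smat w + (n:ℝ)⁻¹ • mulE (onesKronId n d) u⟫ := by rw [hres]
        _ = ⟪xb, mulE Smat w⟫ + (n:ℝ)⁻¹ * ⟪xb, mulE (onesKronId n d) u⟫ := by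
            rw [inner_add_right, real_inner_smul_right]
        _ = ‖w‖ ^ 2 + (n:ℝ)⁻¹ * ‖u‖ ^ 2 := by rw [e1, e2]
    -- strong convexity
    have hstrong : μ * ‖xb‖ ^ 2 ≤ ⟪xb, G⟫ := by
      have := hsc xstar (xb + xstar)
      rw [add_sub_cancel_right] at this
      rwa [real_inner_comm, ← hG] at this
    -- Lipschitz
    have hlip' : ‖G‖ ≤ LF * ‖xb‖ := by
      have := hLip xstar (xb + xstar)
      rwa [add_sub_cancel_right, ← hG] at this
    -- cross term bound via Cauchy–Schwarz
    have hcs : ⟪mulE Smat w, G⟫ ≤ ‖w‖ * ‖G‖ := by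
      calc ⟪mulE Smat w, G⟫ ≤ ‖mulE Smat w‖ * ‖G‖ := real_inner_le_norm _ _
        _ = ‖w‖ * ‖G‖ := by rw [hSnorm]
    -- the key inner-product identity
    have hA : ⟪u, mulE (onesKronId n d)ᵀ G⟫ = (n:ℝ) * (⟪xb, G⟫ - ⟪mulE Smat w, G⟫) := by
      rw [← inner_mulE]
      have h' : mulE (onesKronId n d) u = (n:ℝ) • (xb - mulE Smat w) := by
        rw [← hsub, smul_smul, mul_inv_cancel₀ hn0, one_smul]
      rw [h', real_inner_smul_left, inner_sub_left]
    -- put everything together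
    rw [hA]
    have hbg : ‖w‖ * ‖G‖ ≤ ‖w‖ * (LF * ‖xb‖) :=
      mul_le_mul_of_nonneg_left hlip' (norm_nonneg w)
    have key3 : μ * ‖xb‖ ^ 2 - ‖w‖ * (LF * ‖xb‖)
        ≥ (μ/2) * ‖xb‖ ^ 2 - (LF^2/(2*μ)) * ‖w‖ ^ 2 := by
      have hsq := sq_nonneg (μ * ‖xb‖ - LF * ‖w‖)
      have h2μ : 0 < 2 * μ := by linarith
      rw [ge_iff_le, ← sub_nonneg]
      have : (μ * ‖xb‖ ^ 2 - ‖w‖ * (LF * ‖xb‖)) -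
          ((μ/2) * ‖xb‖ ^ 2 - (LF^2/(2*μ)) * ‖w‖ ^ 2)
          = (μ * ‖xb‖ - LF * ‖w‖)^2 / (2*μ) := by
        field_simp
        ring
      rw [this]
      positivity
    have key5 : (n:ℝ) * ((μ/2) * ‖xb‖ ^ 2 - (LF^2/(2*μ)) * ‖w‖ ^ 2)
        ≤ (n:ℝ) * (⟪xb, G⟫ - ⟪mulE Smat w, G⟫) := by
      apply mul_le_mul_of_nonneg_left _ hn'.le
      linarith [hcs, hbg, hstrong, key3]
    have key6 : (n:ℝ) * ((μ/2) * ‖xb‖ ^ 2 - (LF^2/(2*μ)) * ‖w‖ ^ 2)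
        = (μ/2) * ‖u‖ ^ 2 + (n:ℝ) * (μ/2) * ‖w‖ ^ 2 - (n:ℝ) * (LF^2/(2*μ)) * ‖w‖ ^ 2 := by
      rw [hpyth]
      field_simp
      ring
    have hnonneg1 : 0 ≤ (n:ℝ) * (μ/2) * ‖w‖ ^ 2 := by positivity
    have hnonneg2 : 0 ≤ (n:ℝ) * LF * ‖w‖ ^ 2 := by positivity
    have heq : (n:ℝ) * LF ^ 2 / (2 * μ) * ‖w‖ ^ 2 = (n:ℝ) * (LF^2/(2*μ)) * ‖w‖ ^ 2 := by
      ring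
    linarith [key5, key6, hnonneg1, hnonneg2, heq]
  refine ⟨⟨μ/2, by positivity, n * LF + n * LF ^ 2 / (2 * μ), ?_, ?_⟩, main⟩
  · have h1 : (0:ℝ) < (n:ℝ) * LF := mul_pos hn' hLF
    have h2 : (0:ℝ) ≤ (n:ℝ) * LF ^ 2 / (2 * μ) := by positivity
    linarith
  · intro xb
    have := main xb
    linarith [this]
end
end
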